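/- Let α be a Sturm number, i.e., an irrational quadratic number with 0 < α < 1 (α² = bα + c for some rationals b, c) whose algebraic conjugate ᾱ = b − α satisfies ᾱ ∉ [0,1]. Then there exists a morphism ψ, not equal to the identity, in the monoid ⟨ψ₃,ψ₈⟩ generated by ψ₃ and ψ₈, such that ψ fixes the Sturmian word s_{α,0}. -/

import Mathlib

/-- A morphism of the free monoid `{0,1}*`, determined by the images of the two
letters (`false` encodes the letter 0, `true` encodes the letter 1). -/
abbrev Morph := Bool → List Bool

/-- The identity morphism. -/
def idm : Morph := fun a => [a]

/-- Composition of morphisms: `(M σ τ)(a) = σ(τ(a))`. -/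
def M (σ τ : Morph) : Morph := fun a => (τ a).flatMap σ

/-- `compAll g [i₁, …, iₙ] = g i₁ ∘ g i₂ ∘ ⋯ ∘ g iₙ` (the identity for `n = 0`). -/
def compAll (g : Bool → Morph) (l : List Bool) : Morph :=
  l.foldr (fun i acc => M (g i) acc) idm

/-- Iterated composition of a morphism with itself. -/
def mpow (σ : Morph) : ℕ → Morph
  | 0 => idm
  | k + 1 => M σ (mpow σ k)

/-- The length-`n` prefix of an infinite word. -/
def wpref (w : ℕ → Bool) (n : ℕ) : List Bool := (List.range n).map w

/-- `σ` fixes the infinite word `w`: for every `n`, the finite word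
`σ(w(0))σ(w(1))⋯σ(w(n-1))` is a prefix of `w`. -/
def Fixes (σ : Morph) (w : ℕ → Bool) : Prop :=
  ∀ n : ℕ, (wpref w n).flatMap σ = wpref w ((wpref w n).flatMap σ).length

/-- The integer value `⌊(n+1)α + ρ⌋ - ⌊nα + ρ⌋` of the Sturmian word `s_{α,ρ}`. -/
noncomputable def sfl (α ρ : ℝ) (n : ℕ) : ℤ :=
  ⌊((n : ℝ) + 1) * α + ρ⌋ - ⌊(n : ℝ) * α + ρ⌋

/-- The integer value `⌈(n+1)α + ρ⌉ - ⌈nα + ρ⌉` of the Sturmian word `s'_{α,ρ}`. -/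
noncomputable def scl (α ρ : ℝ) (n : ℕ) : ℤ :=
  ⌈((n : ℝ) + 1) * α + ρ⌉ - ⌈(n : ℝ) * α + ρ⌉

/-- The Sturmian word `s_{α,ρ}` as an infinite binary word. -/
noncomputable def sw (α ρ : ℝ) : ℕ → Bool := fun n => decide (sfl α ρ n = 1)

/-- The Sturmian word `s'_{α,ρ}` as an infinite binary word. -/
noncomputable def sw' (α ρ : ℝ) : ℕ → Bool := fun n => decide (scl α ρ n = 1)

/-- The characteristic word `c_α = s_{α,α}`. -/
noncomputable def cw (α : ℝ) : ℕ → Bool := sw α α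

/-- `ψ₁ : 0 → 01, 1 → 0` (the Fibonacci morphism, `φ₁`). -/
def psi1 : Morph := fun a => match a with | false => [false, true] | true => [false]

/-- `ψ₃ : 0 → 0, 1 → 01` (the morphism `G`, i.e. `φ₀`). -/
def psi3 : Morph := fun a => match a with | false => [false] | true => [false, true]

/-- `ψ₄ : 0 → 0, 1 → 10`. -/
def psi4 : Morph := fun a => match a with | false => [false] | true => [true, false]

/-- `ψ₇ : 0 → 10, 1 → 1`. -/
def psi7 : Morph := fun a => match a with | false => [true, false] | true => [true]

/-- `ψ₈ : 0 → 01, 1 → 1`. -/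
def psi8 : Morph := fun a => match a with | false => [false, true] | true => [true]

/-- Time reversal of a morphism. -/
def trev (σ : Morph) : Morph := fun a => (σ a).reverse

/-- The exchange morphism `E : 0 → 1, 1 → 0`. -/
def Em : Morph := fun a => [!a]

/-- Generators `φ₀, φ₁` indexed by a bit: `false ↦ φ₀ (= ψ₃)`, `true ↦ φ₁ (= ψ₁)`. -/
def phiGen : Bool → Morph := fun b => match b with | false => psi3 | true => psi1

/-- Generators of `⟨ψ₁, ψ₃⟩`: `false` encodes the index 1 (`ψ₁`),
`true` encodes the index 3 (`ψ₃`). -/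
def g13 : Bool → Morph := fun b => match b with | false => psi1 | true => psi3

/-- Generators of `⟨ψ₃, ψ₈⟩`: `false ↦ ψ₃`, `true ↦ ψ₈`. -/
def g38 : Bool → Morph := fun b => match b with | false => psi3 | true => psi8

/-- Generators of `⟨ψ₄, ψ₇⟩`: `false ↦ ψ₄`, `true ↦ ψ₇`. -/
def g47 : Bool → Morph := fun b => match b with | false => psi4 | true => psi7

/-- The Kepler matrices `K₀ = [[1,0],[1,1]]` and `K₁ = [[0,1],[1,1]]`. -/
def K : Bool → Matrix (Fin 2) (Fin 2) ℕ
  | false => !![1, 0; 1, 1]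
  | true => !![0, 1; 1, 1]
/-!
For `β ∈ [0,1]`, `ψ₃` maps `s_{β,0}` to `s_{β/(1+β),0}` and `ψ₈` maps it to `s_{1/(2-β),0}`: the
image of the first `n` letters is the prefix of length `n + ⌊nβ⌋`, resp. `2n - ⌊nβ⌋`, of the new
word. Running these slope maps backwards, `x ↦ x/(1-x)` for `x < 1/2` and `x ↦ 2 - 1/x` for
`x > 1/2`, simultaneously on `α` and its conjugate `ᾱ` acts by an integral unimodular change of
variables on the quadratic `a X² + b X + c` with roots `x, x̄`, so it preserves the discriminant and
keeps `x ∈ (0,1)`, `x̄ ∉ [0,1]`. The latter forces `c (a + b + c) < 0`, which bounds the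
coefficients by the discriminant; so the orbit of `(α, ᾱ)` stays in a finite set, on which the map
is injective because the branch taken can be read off from the sign of the new conjugate. Hence
the orbit is purely periodic, and the branches taken along one period spell a word in `ψ₃, ψ₈`
mapping `s_{α,0}` to itself.
-/
def MapsWord (σ : Morph) (u v : ℕ → Bool) : Prop :=
  ∀ n, (wpref u n).flatMap σ = wpref v ((wpref u n).flatMap σ).length

theorem wpref_succ (w : ℕ → Bool) (n : ℕ) : wpref w (n + 1) = wpref w n ++ [w n] := by
  simp [wpref, List.range_succ]

theorem length_wpref (w : ℕ → Bool) (n : ℕ) : (wpref w n).length = n := by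
  simp [wpref]

theorem flatMap_M (σ τ : Morph) (u : List Bool) :
    u.flatMap (M σ τ) = (u.flatMap τ).flatMap σ :=
  (List.flatMap_assoc ..).symm

theorem MapsWord.of_blocks {σ : Morph} {u v : ℕ → Bool} (N : ℕ → ℕ) (hN0 : N 0 = 0)
    (hblock : ∀ n, wpref v (N (n + 1)) = wpref v (N n) ++ σ (u n)) : MapsWord σ u v := by
  have h : ∀ n, (wpref u n).flatMap σ = wpref v (N n) := by
    intro n
    induction n with
    | zero => simp [wpref, hN0]
    | succ n ih => rw [wpref_succ, List.flatMap_append, ih, hblock]; simp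
  intro n
  rw [h, length_wpref]

theorem MapsWord.comp {σ τ : Morph} {u v w : ℕ → Bool} (hτ : MapsWord τ u v)
    (hσ : MapsWord σ v w) : MapsWord (M σ τ) u w := by
  intro n
  rw [flatMap_M, hτ n, hσ, length_wpref]

theorem natFloor_succ_mul {β : ℝ} (hβ0 : 0 ≤ β) (hβ1 : β ≤ 1) (n : ℕ) :
    ⌊((n + 1 : ℕ) : ℝ) * β⌋₊ = ⌊(n : ℝ) * β⌋₊ + (sw β 0 n).toNat := by
  push_cast
  have hle : ⌊(n : ℝ) * β⌋₊ ≤ ⌊((n : ℝ) + 1) * β⌋₊ := Nat.floor_le_floor (by nlinarith)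
  have hle' : ⌊((n : ℝ) + 1) * β⌋₊ ≤ ⌊(n : ℝ) * β⌋₊ + 1 := by
    rw [← Nat.floor_add_one (by positivity)]
    exact Nat.floor_le_floor (by linarith)
  have hsfl : sfl β 0 n = (⌊((n : ℝ) + 1) * β⌋₊ : ℤ) - ⌊(n : ℝ) * β⌋₊ := by
    simp only [sfl, add_zero]
    rw [Int.natCast_floor_eq_floor (by positivity), Int.natCast_floor_eq_floor (by positivity)]
  obtain ⟨k, hk⟩ := Nat.le.dest hle
  have hk1 : k ≤ 1 := by omega
  simp only [sw, hsfl, ← hk]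
  interval_cases k <;> simp

theorem sw_zero_eq_false {β : ℝ} (hβ0 : 0 ≤ β) (hβ1 : β ≤ 1) {n : ℕ}
    (h : ⌊((n + 1 : ℕ) : ℝ) * β⌋₊ = ⌊(n : ℝ) * β⌋₊) : sw β 0 n = false := by
  have := natFloor_succ_mul hβ0 hβ1 n
  cases hs : sw β 0 n <;> simp_all

theorem sw_zero_eq_true {β : ℝ} (hβ0 : 0 ≤ β) (hβ1 : β ≤ 1) {n : ℕ}
    (h : ⌊((n + 1 : ℕ) : ℝ) * β⌋₊ = ⌊(n : ℝ) * β⌋₊ + 1) : sw β 0 n = true := by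
  have := natFloor_succ_mul hβ0 hβ1 n
  cases hs : sw β 0 n <;> simp_all

theorem natFloor_div_eq {t d : ℝ} {k : ℕ} (hd : 0 < d) (hk : k * d ≤ t) (hk' : t < (k + 1) * d) :
    ⌊t / d⌋₊ = k := by
  rw [Nat.floor_eq_iff (div_nonneg (le_trans (by positivity) hk) hd.le), le_div_iff₀ hd,
    div_lt_iff₀ hd]
  exact ⟨hk, hk'⟩

theorem mapsWord_psi3 {β : ℝ} (hβ0 : 0 ≤ β) (hβ1 : β ≤ 1) :
    MapsWord psi3 (sw β 0) (sw (β / (1 + β)) 0) := by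
  have hγ0 : 0 ≤ β / (1 + β) := by positivity
  have hγ1 : β / (1 + β) ≤ 1 := by rw [div_le_one (by positivity)]; linarith
  have hfloor : ∀ n m : ℕ, n + ⌊(n : ℝ) * β⌋₊ ≤ m → m ≤ n + ⌊(n : ℝ) * β⌋₊ + 1 →
      ⌊(m : ℝ) * (β / (1 + β))⌋₊ = ⌊(n : ℝ) * β⌋₊ := by
    intro n m hm hm'
    have hF : (⌊(n : ℝ) * β⌋₊ : ℝ) ≤ n * β := Nat.floor_le (by positivity)
    have hF' : (n : ℝ) * β < ⌊(n : ℝ) * β⌋₊ + 1 := Nat.lt_floor_add_one _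
    have hm₁ : (n : ℝ) + ⌊(n : ℝ) * β⌋₊ ≤ m := by exact_mod_cast hm
    have hm₂ : (m : ℝ) ≤ n + ⌊(n : ℝ) * β⌋₊ + 1 := by exact_mod_cast hm'
    rw [← mul_div_assoc]
    apply natFloor_div_eq (by positivity) <;> nlinarith
  refine MapsWord.of_blocks (fun n => n + ⌊(n : ℝ) * β⌋₊) (by simp) fun n => ?_
  have hstep := natFloor_succ_mul hβ0 hβ1 n
  set m := n + ⌊(n : ℝ) * β⌋₊
  have h0 : sw (β / (1 + β)) 0 m = false := sw_zero_eq_false hγ0 hγ1 <| by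
    rw [hfloor n m le_rfl (by omega), hfloor n (m + 1) (by omega) le_rfl]
  cases h : sw β 0 n
  · rw [h, Bool.toNat_false, add_zero] at hstep
    rw [show n + 1 + ⌊((n + 1 : ℕ) : ℝ) * β⌋₊ = m + 1 by omega, wpref_succ, h0]
    rfl
  · rw [h, Bool.toNat_true] at hstep
    have h1 : sw (β / (1 + β)) 0 (m + 1) = true := sw_zero_eq_true hγ0 hγ1 <| by
      rw [hfloor n (m + 1) (by omega) le_rfl, hfloor (n + 1) (m + 1 + 1) (by omega) (by omega),
        hstep]
    rw [show n + 1 + ⌊((n + 1 : ℕ) : ℝ) * β⌋₊ = m + 1 + 1 by omega, wpref_succ, wpref_succ, h0, h1,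
      List.append_assoc]
    rfl

theorem mapsWord_psi8 {β : ℝ} (hβ0 : 0 ≤ β) (hβ1 : β ≤ 1) :
    MapsWord psi8 (sw β 0) (sw (1 / (2 - β)) 0) := by
  have hδ0 : 0 ≤ 1 / (2 - β) := by rw [one_div_nonneg]; linarith
  have hδ1 : 1 / (2 - β) ≤ 1 := by rw [div_le_one (by linarith)]; linarith
  have hfloor : ∀ n m : ℕ, m + ⌊(n : ℝ) * β⌋₊ = 2 * n → ⌊(m : ℝ) * (1 / (2 - β))⌋₊ = n := by
    intro n m hm
    have hF : (⌊(n : ℝ) * β⌋₊ : ℝ) ≤ n * β := Nat.floor_le (by positivity)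
    have hF' : (n : ℝ) * β < ⌊(n : ℝ) * β⌋₊ + 1 := Nat.lt_floor_add_one _
    have hm' : (m : ℝ) + ⌊(n : ℝ) * β⌋₊ = 2 * n := by exact_mod_cast hm
    rw [← mul_div_assoc, mul_one]
    apply natFloor_div_eq (by linarith) <;> nlinarith
  have hfloor' : ∀ n m : ℕ, m + ⌊((n + 1 : ℕ) : ℝ) * β⌋₊ = 2 * n + 1 →
      ⌊(m : ℝ) * (1 / (2 - β))⌋₊ = n := by
    intro n m hm
    have hF : (⌊((n + 1 : ℕ) : ℝ) * β⌋₊ : ℝ) ≤ (n + 1) * β := by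
      exact_mod_cast Nat.floor_le (by positivity)
    have hF' : ((n : ℝ) + 1) * β < ⌊((n + 1 : ℕ) : ℝ) * β⌋₊ + 1 := by
      exact_mod_cast Nat.lt_floor_add_one _
    have hm' : (m : ℝ) + ⌊((n + 1 : ℕ) : ℝ) * β⌋₊ = 2 * n + 1 := by exact_mod_cast hm
    rw [← mul_div_assoc, mul_one]
    apply natFloor_div_eq (by linarith) <;> nlinarith
  have hle : ∀ n : ℕ, ⌊(n : ℝ) * β⌋₊ ≤ n := fun n => Nat.floor_le_of_le (by nlinarith)
  refine MapsWord.of_blocks (fun n => 2 * n - ⌊(n : ℝ) * β⌋₊) (by simp) fun n => ?_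
  have hstep := natFloor_succ_mul hβ0 hβ1 n
  have hn := hle n
  set m := 2 * n - ⌊(n : ℝ) * β⌋₊
  have hm0 : ⌊(m : ℝ) * (1 / (2 - β))⌋₊ = n := hfloor n m (by omega)
  cases h : sw β 0 n
  · rw [h, Bool.toNat_false, add_zero] at hstep
    have hm1 : ⌊((m + 1 : ℕ) : ℝ) * (1 / (2 - β))⌋₊ = n := hfloor' n (m + 1) (by omega)
    have h0 : sw (1 / (2 - β)) 0 m = false := sw_zero_eq_false hδ0 hδ1 (by rw [hm0, hm1])
    have h1 : sw (1 / (2 - β)) 0 (m + 1) = true := sw_zero_eq_true hδ0 hδ1 <| by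
      rw [hm1, hfloor (n + 1) (m + 1 + 1) (by omega)]
    rw [show 2 * (n + 1) - ⌊((n + 1 : ℕ) : ℝ) * β⌋₊ = m + 1 + 1 by omega, wpref_succ, wpref_succ,
      h0, h1, List.append_assoc]
    rfl
  · rw [h, Bool.toNat_true] at hstep
    have h0 : sw (1 / (2 - β)) 0 m = true := sw_zero_eq_true hδ0 hδ1 <| by
      rw [hm0, hfloor (n + 1) (m + 1) (by omega)]
    rw [show 2 * (n + 1) - ⌊((n + 1 : ℕ) : ℝ) * β⌋₊ = m + 1 by omega, wpref_succ, h0]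
    rfl

def IsRootPair (a b c : ℤ) (p : ℝ × ℝ) : Prop :=
  a ≠ 0 ∧ (b : ℝ) = -a * (p.1 + p.2) ∧ (c : ℝ) = a * (p.1 * p.2)

namespace IsRootPair

variable {a b c : ℤ} {p : ℝ × ℝ}

theorem mul_add_add_lt_zero (h : IsRootPair a b c p) (hx0 : 0 < p.1) (hx1 : p.1 < 1)
    (hy : p.2 < 0 ∨ 1 < p.2) : c * (a + b + c) < 0 := by
  obtain ⟨ha, hb, hc⟩ := h
  have hy' : p.2 * (1 - p.2) < 0 := by rcases hy with hy | hy <;> nlinarith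
  have ha' : (0 : ℝ) < (a : ℝ) ^ 2 := by positivity
  have : ((c * (a + b + c) : ℤ) : ℝ) = a ^ 2 * (p.1 * (1 - p.1)) * (p.2 * (1 - p.2)) := by
    push_cast; rw [hb, hc]; ring
  have : ((c * (a + b + c) : ℤ) : ℝ) < 0 := by
    rw [this]; exact mul_neg_of_pos_of_neg (by positivity) hy'
  exact_mod_cast this

theorem abs_coeffs_le (h : IsRootPair a b c p) (hx0 : 0 < p.1) (hx1 : p.1 < 1)
    (hy : p.2 < 0 ∨ 1 < p.2) :
    |a| ≤ 3 * (b ^ 2 - 4 * a * c) ∧ |b| ≤ 3 * (b ^ 2 - 4 * a * c) ∧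
      |c| ≤ 3 * (b ^ 2 - 4 * a * c) := by
  -- each of `|c|`, `|a + b + c|`, `|b + 2c|` is at most `b² - 4ac = (b + 2c)² - 4c(a + b + c)`
  have hneg := h.mul_add_add_lt_zero hx0 hx1 hy
  have hc : |c| ≤ -(c * (a + b + c)) := by
    rw [← abs_of_neg hneg, abs_mul]
    exact le_mul_of_one_le_right (abs_nonneg c) (Int.one_le_abs (by rintro h; simp [h] at hneg))
  have hs : |a + b + c| ≤ -(c * (a + b + c)) := by
    rw [← abs_of_neg hneg, abs_mul]
    exact le_mul_of_one_le_left (abs_nonneg _) (Int.one_le_abs (by rintro h; simp [h] at hneg))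
  have he : |b + 2 * c| ≤ (b + 2 * c) ^ 2 := by
    rw [Int.abs_eq_natAbs]; exact Int.natAbs_le_self_sq _
  have hD : b ^ 2 - 4 * a * c = (b + 2 * c) ^ 2 - 4 * (c * (a + b + c)) := by ring
  have hb : |b| ≤ |b + 2 * c| + 2 * |c| := by
    have := abs_sub (b + 2 * c) (2 * c)
    rw [abs_mul] at this; simpa using this
  have ha : |a| ≤ |a + b + c| + |b| + |c| := by
    have h1 := abs_sub (a + b + c) (b + c)
    have h2 := abs_add_le b c
    rw [show a + b + c - (b + c) = a by ring] at h1
    linarith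
  refine ⟨?_, ?_, ?_⟩ <;> nlinarith [abs_nonneg c, abs_nonneg (a + b + c)]

theorem eq_of_isRootPair {q : ℝ × ℝ} (hp : IsRootPair a b c p) (hq : IsRootPair a b c q)
    (hx0 : 0 < p.1) (hx1 : p.1 < 1) (hy : q.2 < 0 ∨ 1 < q.2) : p = q := by
  obtain ⟨ha, hb, hc⟩ := hp
  obtain ⟨-, hb', hc'⟩ := hq
  have ha' : (a : ℝ) ≠ 0 := by exact_mod_cast ha
  have hsum : p.1 + p.2 = q.1 + q.2 := mul_left_cancel₀ ha' (by linarith)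
  have hprod : p.1 * p.2 = q.1 * q.2 := mul_left_cancel₀ ha' (by linarith)
  have hroot : (p.1 - q.1) * (p.1 - q.2) = 0 := by linear_combination p.1 * hsum - hprod
  rcases mul_eq_zero.1 hroot with h | h
  · exact Prod.ext (by linarith) (by linarith)
  · rcases hy with hy | hy <;> linarith

theorem div_one_sub (h : IsRootPair a b c p) (hx : p.1 ≠ 1) (hy : p.2 ≠ 1) :
    IsRootPair (a + b + c) (b + 2 * c) c (p.1 / (1 - p.1), p.2 / (1 - p.2)) := by
  obtain ⟨ha, hb, hc⟩ := h
  have hx' : 1 - p.1 ≠ 0 := sub_ne_zero.2 (Ne.symm hx)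
  have hy' : 1 - p.2 ≠ 0 := sub_ne_zero.2 (Ne.symm hy)
  have hs : ((a + b + c : ℤ) : ℝ) = a * (1 - p.1) * (1 - p.2) := by push_cast; rw [hb, hc]; ring
  refine ⟨?_, ?_, ?_⟩
  · have : ((a + b + c : ℤ) : ℝ) ≠ 0 := by
      rw [hs]; exact mul_ne_zero (mul_ne_zero (by exact_mod_cast ha) hx') hy'
    exact_mod_cast this
  · rw [hs]; push_cast; rw [hb, hc]; field_simp; ring
  · rw [hs, hc]; field_simp

theorem two_sub_one_div (h : IsRootPair a b c p) (hx : p.1 ≠ 0) (hy : p.2 ≠ 0) :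
    IsRootPair c (-(b + 4 * c)) (a + 2 * b + 4 * c) (2 - 1 / p.1, 2 - 1 / p.2) := by
  obtain ⟨ha, hb, hc⟩ := h
  refine ⟨?_, ?_, ?_⟩
  · have : (c : ℝ) ≠ 0 := by rw [hc]; exact mul_ne_zero (by exact_mod_cast ha) (mul_ne_zero hx hy)
    exact_mod_cast this
  · push_cast; rw [hb, hc]; field_simp; ring
  · push_cast; rw [hb, hc]; field_simp; ring

end IsRootPair

structure IsSturmPair (D : ℤ) (p : ℝ × ℝ) : Prop where
  irrational : Irrational p.1
  pos : 0 < p.1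
  lt_one : p.1 < 1
  conj_out : p.2 < 0 ∨ 1 < p.2
  isRootPair : ∃ a b c : ℤ, b ^ 2 - 4 * a * c = D ∧ IsRootPair a b c p

noncomputable def sturmStep (p : ℝ × ℝ) : ℝ × ℝ :=
  if p.1 < 1 / 2 then (p.1 / (1 - p.1), p.2 / (1 - p.2)) else (2 - 1 / p.1, 2 - 1 / p.2)

namespace IsSturmPair

variable {D : ℤ} {p : ℝ × ℝ}

theorem of_quadratic {α : ℝ} (hirr : Irrational α) (h0 : 0 < α) (h1 : α < 1)
    {b c : ℚ} (hquad : α ^ 2 = (b : ℝ) * α + (c : ℝ)) (hconj : (b : ℝ) - α < 0 ∨ 1 < (b : ℝ) - α) :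
    ∃ D, IsSturmPair D (α, b - α) := by
  have hb : (b : ℝ) * b.den = b.num := by exact_mod_cast b.mul_den_eq_num
  have hc : (c : ℝ) * c.den = c.num := by exact_mod_cast c.mul_den_eq_num
  refine ⟨_, hirr, h0, h1, hconj, b.den * c.den, -(b.num * c.den), -(c.num * b.den), rfl,
    by positivity, ?_, ?_⟩
  · push_cast; linear_combination (c.den : ℝ) * hb
  · push_cast; linear_combination (b.den * c.den : ℝ) * hquad + (b.den : ℝ) * hc

theorem sturmStep_of_lt_half (h : IsSturmPair D p) (hx : p.1 < 1 / 2) :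
    IsSturmPair D (sturmStep p) ∧ (sturmStep p).2 < 0 := by
  obtain ⟨hirr, hx0, hx1, hy, a, b, c, hD, hroots⟩ := h
  have hy1 : p.2 ≠ 1 := by rintro h; rcases hy with hy | hy <;> linarith
  have hy' : p.2 / (1 - p.2) < 0 := by
    rcases hy with hy | hy
    · exact div_neg_of_neg_of_pos hy (by linarith)
    · exact div_neg_of_pos_of_neg (by linarith) (by linarith)
  simp only [sturmStep, if_pos hx]
  refine ⟨⟨?_, by apply div_pos <;> linarith, ?_, Or.inl hy',
    a + b + c, b + 2 * c, c, by rw [← hD]; ring, hroots.div_one_sub hx1.ne hy1⟩, hy'⟩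
  · have : p.1 / (1 - p.1) = (1 - p.1)⁻¹ - 1 := by field_simp [sub_ne_zero.2 hx1.ne']; ring
    simpa [this] using ((hirr.natCast_sub 1).inv).sub_natCast 1
  · rw [div_lt_one (by linarith)]; linarith

theorem sturmStep_of_not_lt_half (h : IsSturmPair D p) (hx : ¬p.1 < 1 / 2) :
    IsSturmPair D (sturmStep p) ∧ 1 < (sturmStep p).2 := by
  obtain ⟨hirr, hx0, hx1, hy, a, b, c, hD, hroots⟩ := h
  have hx' : 1 / 2 < p.1 := lt_of_le_of_ne (not_lt.1 hx) fun h => hirr ⟨1 / 2, by simp [← h]⟩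
  have hy0 : p.2 ≠ 0 := by rintro h; rcases hy with hy | hy <;> linarith
  have hy' : 1 < 2 - 1 / p.2 := by
    rcases hy with hy | hy
    · linarith [one_div_neg.2 hy]
    · linarith [(div_lt_one (by linarith : (0 : ℝ) < p.2)).2 hy]
  simp only [sturmStep, if_neg hx]
  refine ⟨⟨?_, ?_, ?_, Or.inr hy',
    c, -(b + 4 * c), a + 2 * b + 4 * c, by rw [← hD]; ring, hroots.two_sub_one_div hx0.ne' hy0⟩, hy'⟩
  · rw [one_div]
    simpa using hirr.inv.natCast_sub 2
  · have : 1 / p.1 < 2 := by rw [div_lt_iff₀ hx0]; linarith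
    linarith
  · have : 1 < 1 / p.1 := by rw [lt_div_iff₀ hx0]; linarith
    linarith

end IsSturmPair

theorem mapsTo_sturmStep (D : ℤ) :
    Set.MapsTo sturmStep {p | IsSturmPair D p} {p | IsSturmPair D p} := by
  intro p (hp : IsSturmPair D p)
  by_cases hx : p.1 < 1 / 2
  · exact (hp.sturmStep_of_lt_half hx).1
  · exact (hp.sturmStep_of_not_lt_half hx).1

theorem injOn_sturmStep (D : ℤ) : Set.InjOn sturmStep {p | IsSturmPair D p} := by
  intro p hp q hq h
  have hp1 : p.2 ≠ 1 := by rintro h; rcases hp.conj_out with h' | h' <;> linarith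
  have hq1 : q.2 ≠ 1 := by rintro h; rcases hq.conj_out with h' | h' <;> linarith
  have div_one_sub_inj : ∀ s t : ℝ, s ≠ 1 → t ≠ 1 → s / (1 - s) = t / (1 - t) → s = t := by
    intro s t hs ht hst
    field_simp [sub_ne_zero.2 hs.symm, sub_ne_zero.2 ht.symm] at hst
    linarith
  by_cases hpx : p.1 < 1 / 2 <;> by_cases hqx : q.1 < 1 / 2
  · simp only [sturmStep, if_pos hpx, if_pos hqx, Prod.mk.injEq] at h
    exact Prod.ext (div_one_sub_inj _ _ (by linarith) (by linarith) h.1)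
      (div_one_sub_inj _ _ hp1 hq1 h.2)
  · linarith [h ▸ (hp.sturmStep_of_lt_half hpx).2, (hq.sturmStep_of_not_lt_half hqx).2]
  · linarith [h ▸ (hp.sturmStep_of_not_lt_half hpx).2, (hq.sturmStep_of_lt_half hqx).2]
  · simp only [sturmStep, if_neg hpx, if_neg hqx, Prod.mk.injEq] at h
    simp only [sub_right_inj, one_div, inv_inj] at h
    exact Prod.ext h.1 h.2

theorem finite_setOf_isSturmPair (D : ℤ) : {p | IsSturmPair D p}.Finite := by
  let box : Finset (ℤ × ℤ × ℤ) := Finset.Icc (-(3 * D), -(3 * D), -(3 * D)) (3 * D, 3 * D, 3 * D)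
  let fiber (t : ℤ × ℤ × ℤ) : Set (ℝ × ℝ) := {p | IsSturmPair D p ∧ IsRootPair t.1 t.2.1 t.2.2 p}
  have hfiber : ∀ t, (fiber t).Subsingleton := fun t p hp q hq =>
    hp.2.eq_of_isRootPair hq.2 hp.1.pos hp.1.lt_one hq.1.conj_out
  refine (box.finite_toSet.biUnion fun t _ => (hfiber t).finite).subset fun p hp => ?_
  obtain ⟨a, b, c, rfl, hroots⟩ := hp.isRootPair
  obtain ⟨ha, hb, hc⟩ := hroots.abs_coeffs_le hp.pos hp.lt_one hp.conj_out
  rw [abs_le] at ha hb hc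
  refine Set.mem_biUnion (x := (a, b, c)) ?_ ⟨hp, hroots⟩
  simp only [box, Finset.coe_Icc, Set.mem_Icc, Prod.mk_le_mk]
  exact ⟨⟨ha.1, hb.1, hc.1⟩, ha.2, hb.2, hc.2⟩

theorem exists_pos_iterate_eq_of_injOn {α : Type*} {f : α → α} {s : Set α} (hs : s.Finite)
    (hmaps : Set.MapsTo f s s) (hinj : Set.InjOn f s) {x : α} (hx : x ∈ s) :
    ∃ n, 0 < n ∧ f^[n] x = x := by
  have := hs.to_subtype
  obtain ⟨n, hn, hper⟩ :=
    Function.mem_periodicPts.1 ((hmaps.restrict_inj.2 hinj).mem_periodicPts ⟨x, hx⟩)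
  exact ⟨n, hn, by simpa [hmaps.coe_iterate_restrict] using congrArg Subtype.val hper⟩

theorem mapsWord_sturmStep {p : ℝ × ℝ} (hx0 : 0 ≤ p.1) (hx1 : p.1 ≤ 1) :
    MapsWord (g38 (decide (1 / 2 ≤ p.1))) (sw (sturmStep p).1 0) (sw p.1 0) := by
  by_cases hx : p.1 < 1 / 2
  · have h := mapsWord_psi3 (β := p.1 / (1 - p.1)) (div_nonneg hx0 (by linarith))
      (by rw [div_le_one (by linarith)]; linarith)
    rw [show p.1 / (1 - p.1) / (1 + p.1 / (1 - p.1)) = p.1 by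
      field_simp [(by linarith : 1 - p.1 ≠ 0)]; ring] at h
    rw [decide_eq_false (not_le.2 hx)]
    simp only [sturmStep, if_pos hx]
    exact h
  · have hx' : 0 < p.1 := by linarith
    have h := mapsWord_psi8 (β := 2 - 1 / p.1) (by rw [sub_nonneg, div_le_iff₀ hx']; linarith)
      (by rw [sub_le_comm, le_div_iff₀ hx']; linarith)
    rw [show 1 / (2 - (2 - 1 / p.1)) = p.1 by field_simp; ring] at h
    rw [decide_eq_true (not_lt.1 hx)]
    simp only [sturmStep, if_neg hx]
    exact h

theorem mapsWord_idm (u : ℕ → Bool) : MapsWord idm u u := by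
  intro n
  rw [show (wpref u n).flatMap idm = wpref u n from List.flatMap_singleton' _, length_wpref]

theorem mapsWord_compAll_orbit (n : ℕ) {p : ℝ × ℝ}
    (hp : ∀ k, 0 ≤ (sturmStep^[k] p).1 ∧ (sturmStep^[k] p).1 ≤ 1) :
    MapsWord (compAll g38 ((List.range n).map fun k => decide (1 / 2 ≤ (sturmStep^[k] p).1)))
      (sw (sturmStep^[n] p).1 0) (sw p.1 0) := by
  induction n generalizing p with
  | zero => exact mapsWord_idm _
  | succ n ih =>
    rw [List.range_succ_eq_map, List.map_cons, List.map_map]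
    exact (ih fun k => hp (k + 1)).comp (mapsWord_sturmStep (hp 0).1 (hp 0).2)

theorem compAll_g38_ne_nil (l : List Bool) (a : Bool) : compAll g38 l a ≠ [] := by
  induction l with
  | nil => simp [compAll, idm]
  | cons i l ih =>
    show (compAll g38 l a).flatMap (g38 i) ≠ []
    obtain ⟨b, t, h⟩ := List.exists_cons_of_ne_nil ih
    cases i <;> cases b <;> simp [h, g38, psi3, psi8]

theorem compAll_g38_cons_ne_idm (i : Bool) (l : List Bool) : compAll g38 (i :: l) ≠ idm := by
  -- `ψ₃` puts a `0` into the image of `1`, and `ψ₈` a `1` into the image of `0`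
  intro h
  cases i
  · obtain ⟨b, t, hbt⟩ := List.exists_cons_of_ne_nil (compAll_g38_ne_nil l true)
    have h' : (compAll g38 l true).flatMap psi3 = [true] := congrFun h true
    cases b <;> simp [hbt, psi3] at h'
  · obtain ⟨b, t, hbt⟩ := List.exists_cons_of_ne_nil (compAll_g38_ne_nil l false)
    have h' : (compAll g38 l false).flatMap psi8 = [false] := congrFun h false
    cases b <;> simp [hbt, psi8] at h'

/-- For every Sturm number `α` — an irrational quadratic in
`(0,1)` with `α² = bα + c` (`b, c ∈ ℚ`) whose conjugate `ᾱ = b - α` lies outside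
`[0,1]` — there is a non-identity morphism `ψ ∈ ⟨ψ₃, ψ₈⟩` fixing `s_{α,0}`. -/
theorem sturm_number_fixes_s_alpha_zero (α : ℝ) (hirr : Irrational α)
    (h0 : 0 < α) (h1 : α < 1)
    (b c : ℚ) (hquad : α ^ 2 = (b : ℝ) * α + (c : ℝ))
    (hconj : (b : ℝ) - α < 0 ∨ 1 < (b : ℝ) - α) :
    ∃ ψ : Morph, (∃ l : List Bool, ψ = compAll g38 l) ∧ ψ ≠ idm ∧ Fixes ψ (sw α 0) := by
  obtain ⟨D, hα⟩ := IsSturmPair.of_quadratic hirr h0 h1 hquad hconj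
  have horbit (k : ℕ) : IsSturmPair D (sturmStep^[k] (α, b - α)) :=
    (mapsTo_sturmStep D).iterate k hα
  obtain ⟨n, hn, hper⟩ := exists_pos_iterate_eq_of_injOn (finite_setOf_isSturmPair D)
    (mapsTo_sturmStep D) (injOn_sturmStep D) hα
  obtain ⟨i, l, hl⟩ : ∃ i l,
      (List.range n).map (fun k => decide (1 / 2 ≤ (sturmStep^[k] (α, b - α)).1)) = i :: l :=
    List.exists_cons_of_ne_nil (by simpa using hn.ne')
  refine ⟨compAll g38 (i :: l), ⟨_, rfl⟩, compAll_g38_cons_ne_idm i l, ?_⟩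
  have := mapsWord_compAll_orbit n fun k => ⟨(horbit k).pos.le, (horbit k).lt_one.le⟩
  rwa [hper, hl] at this
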